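/- arXiv:2605.04493 — 3 statements merged into one kernel-verified Lean document; each statement's English description precedes it below -/
import Mathlib

section
/- Let f(x) = (1/σ)(1+κx/σ)^(-(1+κ)/κ) on x ≥ 0 with κ > 0, σ > 0. The normalized escort density g(x) = f(x)^q / ∫_0^∞ f(t)^q dt with q = 1 + κ/(1+κ) equals the coupled exponential density with modified coupling κ' = κ/(1+κ) and scale σ' = σ/(1+κ), i.e. g(x) = (1/σ')(1+κ'x/σ')^(-(1+κ')/κ'). -/
noncomputable def cexpDensity (σ κ x : ℝ) : ℝ :=
  (1 / σ) * (1 + κ * x / σ) ^ (-((1 + κ) / κ))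

open MeasureTheory Set

lemma integral_Ioi_comp_add_right (f : ℝ → ℝ) (a d : ℝ) :
    ∫ x in Ioi a, f (x + d) = ∫ x in Ioi (a + d), f x := by
  have h := (measurePreserving_add_right (volume : Measure ℝ) d).setIntegral_preimage_emb
    (measurableEmbedding_addRight d) f (Ioi (a + d))
  have hpre : (fun x => x + d) ⁻¹' Ioi (a + d) = Ioi a := by
    ext x; simp [Set.mem_Ioi]
  rw [hpre] at h
  exact h

lemma integral_one_add_mul_rpow {c p : ℝ} (hc : 0 < c) (hp : 1 < p) :
    ∫ t in Ioi (0 : ℝ), (1 + c * t) ^ (-p) = 1 / (c * (p - 1)) := by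
  have h1 : ∫ t in Ioi (0 : ℝ), (1 + c * t) ^ (-p)
      = c⁻¹ • ∫ u in Ioi (0 : ℝ), (1 + u) ^ (-p) := by
    have := integral_comp_mul_left_Ioi (fun u => (1 + u) ^ (-p)) 0 hc
    simpa using this
  have h2 : ∫ u in Ioi (0 : ℝ), (1 + u) ^ (-p) = ∫ v in Ioi (1 : ℝ), v ^ (-p) := by
    have := integral_Ioi_comp_add_right (fun v => v ^ (-p)) 0 1
    simpa [add_comm] using this
  have h3 : ∫ v in Ioi (1 : ℝ), v ^ (-p) = 1 / (p - 1) := by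
    rw [integral_Ioi_rpow_of_lt (by linarith) one_pos, Real.one_rpow]
    have : -p + 1 = -(p - 1) := by ring
    rw [this, div_neg, neg_div, neg_neg]
  rw [h1, h2, h3, smul_eq_mul]
  rw [one_div, one_div, mul_inv, mul_comm]

theorem escort_is_coupled_exponential (σ κ : ℝ) (hσ : 0 < σ) (hκ : 0 < κ) :
    ∀ x : ℝ, 0 ≤ x →
      (cexpDensity σ κ x) ^ (1 + κ / (1 + κ)) /
          (∫ t in Set.Ioi (0 : ℝ), (cexpDensity σ κ t) ^ (1 + κ / (1 + κ))) =
        cexpDensity (σ / (1 + κ)) (κ / (1 + κ)) x := by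
  intro x hx
  have h1κ : (0:ℝ) < 1 + κ := by linarith
  set q : ℝ := 1 + κ / (1 + κ) with hq
  set p : ℝ := (1 + 2 * κ) / κ with hpdef
  have hp1 : 1 < p := by
    rw [hpdef, lt_div_iff₀ hκ]; linarith
  -- pointwise rewriting of the escort integrand
  have key : ∀ t : ℝ, 0 ≤ t →
      (cexpDensity σ κ t) ^ q = σ ^ (-q) * (1 + κ * t / σ) ^ (-p) := by
    intro t ht
    have hbase : (0:ℝ) < 1 + κ * t / σ := by positivity
    unfold cexpDensity
    rw [Real.mul_rpow (by positivity) (Real.rpow_nonneg hbase.le _),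
      ← Real.rpow_mul hbase.le]
    congr 1
    · rw [one_div, ← Real.rpow_neg_one σ, ← Real.rpow_mul hσ.le, neg_one_mul]
    · congr 1
      rw [hq, hpdef]
      field_simp
      ring
  have hZ : (∫ t in Set.Ioi (0 : ℝ), (cexpDensity σ κ t) ^ q)
      = σ ^ (-q) * (σ / (1 + κ)) := by
    rw [setIntegral_congr_fun measurableSet_Ioi
      (fun t (ht : t ∈ Ioi 0) => key t (le_of_lt ht))]
    have hrw : ∀ t : ℝ, κ * t / σ = (κ / σ) * t := fun t => by ring
    simp_rw [hrw]
    rw [integral_const_mul, integral_one_add_mul_rpow (by positivity) hp1]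
    congr 1
    have hp' : p - 1 = (1 + κ) / κ := by rw [hpdef]; field_simp; ring
    rw [hp']
    rw [div_mul_div_comm, one_div, inv_div, mul_comm σ κ,
      mul_div_mul_left _ _ hκ.ne']
  rw [hZ, key x hx]
  have hS : (0:ℝ) < σ ^ (-q) := Real.rpow_pos_of_pos hσ _
  have hA : (0:ℝ) < 1 + κ * x / σ := by positivity
  -- the right-hand side
  have hrhs : cexpDensity (σ / (1 + κ)) (κ / (1 + κ)) x
      = ((1 + κ) / σ) * (1 + κ * x / σ) ^ (-p) := by
    unfold cexpDensity
    have e1 : κ / (1 + κ) * x / (σ / (1 + κ)) = κ * x / σ := by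
      field_simp
    have e2 : -((1 + κ / (1 + κ)) / (κ / (1 + κ))) = -p := by
      rw [hpdef]; field_simp; ring
    rw [e1, e2]
    congr 1
    field_simp
  rw [hrhs]
  field_simp
end

section
/- Let f(x) = (1/σ)(1+κx/σ)^(-(1+κ)/κ) on x ≥ 0 with κ > 0, σ > 0. The independent-equals first moment ∫_0^∞ x f(x)^q dx / ∫_0^∞ f(x)^q dx with q = 1 + κ/(1+κ) equals σ. -/
open MeasureTheory Set Filter Topology

section OneAddMulRpow

variable {a c : ℝ}

lemma hasDerivAt_one_add_mul_rpow_div {x : ℝ} (hx : 0 < 1 + c * x) (hc : c ≠ 0)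
    (ha : a + 1 ≠ 0) :
    HasDerivAt (fun y => (1 + c * y) ^ (a + 1) / (c * (a + 1))) ((1 + c * x) ^ a) x := by
  have h := (((hasDerivAt_id x).const_mul c).const_add 1).rpow_const (p := a + 1) (Or.inl hx.ne')
  refine (h.div_const (c * (a + 1))).congr_deriv ?_
  rw [add_sub_cancel_right]
  field_simp
  simp

lemma tendsto_one_add_mul_rpow_div_atTop (ha : a < -1) (hc : 0 < c) :
    Tendsto (fun y => (1 + c * y) ^ (a + 1) / (c * (a + 1))) atTop (𝓝 0) := by
  have h := tendsto_rpow_neg_atTop (y := -(a + 1)) (by linarith)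
  rw [neg_neg] at h
  simpa using (h.comp (tendsto_atTop_add_const_left _ 1
    (tendsto_id.const_mul_atTop hc))).div_const (c * (a + 1))

lemma integrableOn_Ioi_one_add_mul_rpow (ha : a < -1) (hc : 0 < c) :
    IntegrableOn (fun x => (1 + c * x) ^ a) (Ioi 0) :=
  integrableOn_Ioi_deriv_of_nonneg'
    (fun x (hx : 0 ≤ x) => hasDerivAt_one_add_mul_rpow_div (by positivity) hc.ne' (by linarith))
    (fun x (hx : 0 < x) => by positivity) (tendsto_one_add_mul_rpow_div_atTop ha hc)

lemma integral_Ioi_one_add_mul_rpow (ha : a < -1) (hc : 0 < c) :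
    ∫ x in Ioi 0, (1 + c * x) ^ a = -1 / (c * (a + 1)) := by
  rw [integral_Ioi_of_hasDerivAt_of_nonneg'
    (fun x (hx : 0 ≤ x) => hasDerivAt_one_add_mul_rpow_div (by positivity) hc.ne' (by linarith))
    (fun x (hx : 0 < x) => by positivity) (tendsto_one_add_mul_rpow_div_atTop ha hc)]
  simp [neg_div]

lemma integral_Ioi_mul_one_add_mul_rpow (ha : a < -2) (hc : 0 < c) :
    ∫ x in Ioi 0, x * (1 + c * x) ^ a = 1 / (c ^ 2 * (a + 1) * (a + 2)) := by
  have hsplit : ∀ x ∈ Ioi (0 : ℝ),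
      x * (1 + c * x) ^ a = c⁻¹ * ((1 + c * x) ^ (a + 1) - (1 + c * x) ^ a) := by
    intro x (hx : 0 < x)
    rw [Real.rpow_add_one (by positivity : (0 : ℝ) < 1 + c * x).ne']
    field_simp
    ring
  have ha1 : a + 1 < -1 := by linarith
  rw [setIntegral_congr_fun measurableSet_Ioi hsplit, integral_const_mul,
    integral_sub (integrableOn_Ioi_one_add_mul_rpow ha1 hc)
      (integrableOn_Ioi_one_add_mul_rpow (by linarith) hc),
    integral_Ioi_one_add_mul_rpow ha1 hc, integral_Ioi_one_add_mul_rpow (by linarith) hc]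
  have : a + 1 ≠ 0 := by linarith
  have : a + 1 + 1 ≠ 0 := by linarith
  have : a + 2 ≠ 0 := by linarith
  field_simp
  ring

lemma integral_Ioi_mul_one_add_mul_rpow_div_integral (ha : a < -2) (hc : 0 < c) :
    (∫ x in Ioi 0, x * (1 + c * x) ^ a) / ∫ x in Ioi 0, (1 + c * x) ^ a = -1 / (c * (a + 2)) := by
  rw [integral_Ioi_mul_one_add_mul_rpow ha hc, integral_Ioi_one_add_mul_rpow (by linarith) hc]
  have : a + 1 ≠ 0 := by linarith
  have : a + 2 ≠ 0 := by linarith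
  field_simp

end OneAddMulRpow

lemma cexpDensity_rpow {σ κ x : ℝ} (hσ : 0 < σ) (hκ : 0 ≤ κ) (hx : 0 ≤ x) (p : ℝ) :
    cexpDensity σ κ x ^ p = (1 / σ) ^ p * (1 + κ / σ * x) ^ (-((1 + κ) / κ) * p) := by
  rw [cexpDensity, Real.mul_rpow (by positivity) (by positivity), ← Real.rpow_mul (by positivity),
    mul_div_right_comm]

theorem independent_equals_moment (σ κ : ℝ) (hσ : 0 < σ) (hκ : 0 < κ) :
    (∫ x in Set.Ioi (0 : ℝ), x * (cexpDensity σ κ x) ^ (1 + κ / (1 + κ))) /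
        (∫ x in Set.Ioi (0 : ℝ), (cexpDensity σ κ x) ^ (1 + κ / (1 + κ))) = σ := by
  set a := -((1 + κ) / κ) * (1 + κ / (1 + κ))
  have ha : a = -2 - 1 / κ := by
    simp only [a]
    field_simp
    ring
  have ha2 : a < -2 := by
    rw [ha]
    linarith [one_div_pos.mpr hκ]
  have hf : ∀ x ∈ Ioi (0 : ℝ), cexpDensity σ κ x ^ (1 + κ / (1 + κ)) =
      (1 / σ) ^ (1 + κ / (1 + κ)) * (1 + κ / σ * x) ^ a := fun x (hx : 0 < x) =>
    cexpDensity_rpow hσ hκ.le hx.le _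
  rw [setIntegral_congr_fun measurableSet_Ioi hf,
    setIntegral_congr_fun measurableSet_Ioi fun x hx => by rw [hf x hx, mul_left_comm],
    integral_const_mul, integral_const_mul, mul_div_mul_left _ _ (by positivity),
    integral_Ioi_mul_one_add_mul_rpow_div_integral ha2 (by positivity), ha]
  field_simp
  ring
end

section
/- For κ > 0, α > 0, d > 0 and λ > 0, with d_α = d/α, the limit as W → ∞ of [ln_κ((λW)^(1/(1+d_ακ))) / ln_κ(W^(1/(1+d_ακ)))]^(1/α) equals λ^((κ/α)/(1+d_ακ)), where ln_κ(x) = (x^κ-1)/κ. Hence the non-trace coupled entropy has Hanel-Thurner power-law scaling exponent c̃ = (κ/α)/(1+(d/α)κ). -/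
noncomputable def clog (κ x : ℝ) : ℝ := (x ^ κ - 1) / κ

theorem hanel_thurner_c_scaling (κ α d lam : ℝ)
    (hκ : 0 < κ) (hα : 0 < α) (hd : 0 < d) (hlam : 0 < lam) :
    Filter.Tendsto
      (fun W : ℝ =>
        (clog κ ((lam * W) ^ (1 / (1 + (d / α) * κ))) /
            clog κ (W ^ (1 / (1 + (d / α) * κ)))) ^ (1 / α))
      Filter.atTop
      (nhds (lam ^ ((κ / α) / (1 + (d / α) * κ)))) := by
  set p : ℝ := 1 / (1 + (d / α) * κ) with hpdef
  have hden : (0:ℝ) < 1 + (d / α) * κ := by positivity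
  have hp : 0 < p := by positivity
  have hpk : 0 < p * κ := mul_pos hp hκ
  set c : ℝ := lam ^ (p * κ) with hcdef
  have hc : 0 < c := Real.rpow_pos_of_pos hlam _
  -- limit of (c*t - 1)/(t - 1) as t → ∞ is c
  have hg : Filter.Tendsto (fun t : ℝ => (c * t - 1) / (t - 1)) Filter.atTop (nhds c) := by
    have h1 : Filter.Tendsto (fun t : ℝ => (c - t⁻¹) / (1 - t⁻¹)) Filter.atTop
        (nhds ((c - 0) / (1 - 0))) := by
      exact Filter.Tendsto.div
        (Filter.Tendsto.sub tendsto_const_nhds tendsto_inv_atTop_zero)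
        (Filter.Tendsto.sub tendsto_const_nhds tendsto_inv_atTop_zero) (by norm_num)
    have h2 : (fun t : ℝ => (c - t⁻¹) / (1 - t⁻¹)) =ᶠ[Filter.atTop]
        (fun t : ℝ => (c * t - 1) / (t - 1)) := by
      filter_upwards [Filter.eventually_gt_atTop (1:ℝ)] with t ht
      have ht0 : t ≠ 0 := by linarith
      have ht1 : t - 1 ≠ 0 := by intro h; apply ht.ne'; linarith
      field_simp
    simpa using h1.congr' h2
  -- composition with t = W^(p*κ)
  have hW : Filter.Tendsto (fun W : ℝ => W ^ (p * κ)) Filter.atTop Filter.atTop :=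
    tendsto_rpow_atTop hpk
  have hratio : Filter.Tendsto
      (fun W : ℝ => clog κ ((lam * W) ^ p) / clog κ (W ^ p))
      Filter.atTop (nhds c) := by
    have h3 : Filter.Tendsto (fun W : ℝ => (c * W ^ (p * κ) - 1) / (W ^ (p * κ) - 1))
        Filter.atTop (nhds c) := hg.comp hW
    refine h3.congr' ?_
    filter_upwards [Filter.eventually_gt_atTop (0:ℝ)] with W hW0
    have hlw : (0:ℝ) < lam * W := mul_pos hlam hW0
    have e1 : clog κ ((lam * W) ^ p) = (c * W ^ (p * κ) - 1) / κ := by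
      unfold clog
      rw [← Real.rpow_mul hlw.le, Real.mul_rpow hlam.le hW0.le]
    have e2 : clog κ (W ^ p) = (W ^ (p * κ) - 1) / κ := by
      unfold clog
      rw [← Real.rpow_mul hW0.le]
    rw [e1, e2]
    field_simp
  have := hratio.rpow_const (p := 1 / α) (Or.inr (by positivity))
  have hcc : c ^ (1 / α) = lam ^ ((κ / α) / (1 + (d / α) * κ)) := by
    rw [hcdef, ← Real.rpow_mul hlam.le]
    congr 1
    rw [hpdef]
    field_simp [hα.ne', hden.ne']
  rw [hcc] at this
  exact this
end
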